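/- With v''_n the volume of the perturbed diamond of parameter n and A_n the set of perturbed diamonds of parameter n whose center (x,x') satisfies (d(o,x) < r_n + T and d'(o',x') < T) or (d'(o',x') < r'_n + T and d(o,x) < T), one has |A_n| ≤ M^T (v_{r_n} v'_T + v_T v'_{r'_n}), where M bounds the generating set sizes; consequently, if v''_n / max(v_{r_n}, v'_{r'_n}) → ∞, then |A_n| / v''_n → 0 as n → ∞ for each fixed T. -/

import Mathlib

open Filter

/-- The word ball of radius `n`: all products of at most `n` generators. -/
def wordBall {G : Type*} [Group G] (S : Set G) (n : ℕ) : Set G :=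
  {g | ∃ l : List G, l.length ≤ n ∧ (∀ x ∈ l, x ∈ S) ∧ l.prod = g}

/-- The volume of the word ball of radius `n`. -/
noncomputable def ballVol {G : Type*} [Group G] (S : Set G) (n : ℕ) : ℕ :=
  (wordBall S n).ncard

/-- Word distance associated to the generating set `S`. -/
noncomputable def wordDist {G : Type*} [Group G] (S : Set G) (g h : G) : ℕ :=
  sInf {n | g⁻¹ * h ∈ wordBall S n}

/-- The volume of the sphere of radius `k` (with `s 0 = 1`). -/
noncomputable def sphVol {G : Type*} [Group G] (S : Set G) (k : ℕ) : ℕ :=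
  if k = 0 then 1 else ballVol S k - ballVol S (k - 1)

/-! A corner center lies in `B(r_n + T) × B'(T)` or in `B(T) × B'(r'_n + T)`, and the growth bound
`v_{k+T} ≤ M^T v_k` turns the volumes of these two products into the stated bound. That bound is
`O(max(v_{r_n}, v'_{r'_n}))` for fixed `T`, hence `o(v''_n)` under the growth hypothesis. -/

open scoped Pointwise

section WordBall

variable {G : Type*} [Group G]

lemma wordBall_mono (S : Set G) {n m : ℕ} (h : n ≤ m) : wordBall S n ⊆ wordBall S m := by
  rintro g ⟨l, hl, hlS, rfl⟩
  exact ⟨l, hl.trans h, hlS, rfl⟩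

lemma wordBall_succ_subset (S : Set G) (n : ℕ) :
    wordBall S (n + 1) ⊆ insert 1 (S * wordBall S n) := by
  rintro g ⟨l, hl, hlS, rfl⟩
  cases l with
  | nil => exact Set.mem_insert _ _
  | cons a l =>
    refine Or.inr ⟨a, hlS a List.mem_cons_self, l.prod, ⟨l, ?_, ?_, rfl⟩, List.prod_cons.symm⟩
    · simpa using hl
    · exact fun x hx => hlS x (List.mem_cons_of_mem a hx)

lemma wordBall_finite {S : Set G} (hS : S.Finite) (n : ℕ) : (wordBall S n).Finite := by
  induction n with
  | zero =>
    refine (Set.finite_singleton 1).subset ?_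
    rintro g ⟨l, hl, -, rfl⟩
    simp [List.eq_nil_of_length_eq_zero (Nat.le_zero.mp hl)]
  | succ n ih => exact ((hS.mul ih).insert 1).subset (wordBall_succ_subset S n)

lemma ballVol_add_le {S : Set G} {M : ℕ} (hM : ∀ k, ballVol S (k + 1) ≤ M * ballVol S k)
    (n t : ℕ) : ballVol S (n + t) ≤ M ^ t * ballVol S n := by
  induction t with
  | zero => simp
  | succ t ih =>
    calc ballVol S (n + t + 1) ≤ M * ballVol S (n + t) := hM _
      _ ≤ M * (M ^ t * ballVol S n) := Nat.mul_le_mul_left _ ih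
      _ = M ^ (t + 1) * ballVol S n := by ring

/-- Without the generation hypothesis, `sInf ∅ = 0` would make `wordDist` vanish off the
subgroup generated by `S`. -/
lemma inv_mul_mem_wordBall_of_wordDist_lt {S : Set G} (hgen : ∀ g : G, ∃ n, g ∈ wordBall S n)
    {g h : G} {k : ℕ} (hk : wordDist S g h < k) : g⁻¹ * h ∈ wordBall S k :=
  wordBall_mono S hk.le (Nat.sInf_mem (hgen (g⁻¹ * h)))

lemma mem_wordBall_of_wordDist_one_lt {S : Set G} (hgen : ∀ g : G, ∃ n, g ∈ wordBall S n)
    {g : G} {k : ℕ} (hk : wordDist S 1 g < k) : g ∈ wordBall S k := by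
  simpa using inv_mul_mem_wordBall_of_wordDist_lt hgen hk

end WordBall

lemma ncard_corner_le {G G' : Type*} [Group G] [Group G'] (S : Finset G) (S' : Finset G')
    (hgen : ∀ g : G, ∃ n, g ∈ wordBall (S : Set G) n)
    (hgen' : ∀ g : G', ∃ n, g ∈ wordBall (S' : Set G') n) {M : ℕ}
    (hM : ∀ k, ballVol (S : Set G) (k + 1) ≤ M * ballVol (S : Set G) k)
    (hM' : ∀ k, ballVol (S' : Set G') (k + 1) ≤ M * ballVol (S' : Set G') k) (a b T : ℕ) :
    {x : G × G' |
        (wordDist (S : Set G) 1 x.1 < a + T ∧ wordDist (S' : Set G') 1 x.2 < T) ∨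
        (wordDist (S' : Set G') 1 x.2 < b + T ∧ wordDist (S : Set G) 1 x.1 < T)}.ncard ≤
      M ^ T * (ballVol (S : Set G) a * ballVol (S' : Set G') T +
        ballVol (S : Set G) T * ballVol (S' : Set G') b) := by
  set B := wordBall (S : Set G)
  set B' := wordBall (S' : Set G')
  have hcover : {x : G × G' |
      (wordDist (S : Set G) 1 x.1 < a + T ∧ wordDist (S' : Set G') 1 x.2 < T) ∨
      (wordDist (S' : Set G') 1 x.2 < b + T ∧ wordDist (S : Set G) 1 x.1 < T)} ⊆
      B (a + T) ×ˢ B' T ∪ B T ×ˢ B' (b + T) := by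
    rintro ⟨x, x'⟩ (⟨h, h'⟩ | ⟨h', h⟩)
    · exact Or.inl ⟨mem_wordBall_of_wordDist_one_lt hgen h,
        mem_wordBall_of_wordDist_one_lt hgen' h'⟩
    · exact Or.inr ⟨mem_wordBall_of_wordDist_one_lt hgen h,
        mem_wordBall_of_wordDist_one_lt hgen' h'⟩
  have hfin (k k' : ℕ) : (B k ×ˢ B' k').Finite :=
    (wordBall_finite S.finite_toSet k).prod (wordBall_finite S'.finite_toSet k')
  calc _ ≤ (B (a + T) ×ˢ B' T ∪ B T ×ˢ B' (b + T)).ncard :=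
        Set.ncard_le_ncard hcover ((hfin _ _).union (hfin _ _))
    _ ≤ ballVol (S : Set G) (a + T) * ballVol (S' : Set G') T +
        ballVol (S : Set G) T * ballVol (S' : Set G') (b + T) :=
      (Set.ncard_union_le _ _).trans_eq (by rw [Set.ncard_prod, Set.ncard_prod]; rfl)
    _ ≤ M ^ T * ballVol (S : Set G) a * ballVol (S' : Set G') T +
        ballVol (S : Set G) T * (M ^ T * ballVol (S' : Set G') b) := by
      gcongr
      exacts [ballVol_add_le hM a T, ballVol_add_le hM' b T]
    _ = _ := by ring

lemma tendsto_div_nhds_zero_of_le_mul {α : Type*} {l : Filter α} {a m v : α → ℝ} (C : ℝ)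
    (ha : ∀ x, 0 ≤ a x) (hv : ∀ x, 0 ≤ v x) (hle : ∀ x, a x ≤ C * m x)
    (hvm : Tendsto (fun x => v x / m x) l atTop) :
    Tendsto (fun x => a x / v x) l (nhds 0) := by
  have hmv : Tendsto (fun x => m x / v x) l (nhds 0) := by
    simpa only [Pi.inv_def, inv_div] using hvm.inv_tendsto_atTop
  refine tendsto_of_tendsto_of_tendsto_of_le_of_le tendsto_const_nhds
    (by simpa using hmv.const_mul C) (fun x => div_nonneg (ha x) (hv x)) (fun x => ?_)
  rw [mul_div_assoc']
  exact div_le_div_of_nonneg_right (hle x) (hv x)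


theorem corner_centers_negligible_general {G G' : Type*} [Group G] [Group G']
    (S : Finset G) (S' : Finset G')
    (hgen : ∀ g : G, ∃ n : ℕ, g ∈ wordBall (S : Set G) n)
    (hgen' : ∀ g : G', ∃ n : ℕ, g ∈ wordBall (S' : Set G') n)
    (M : ℕ) (hMv : ∀ k : ℕ, ballVol (S : Set G) (k + 1) ≤ M * ballVol (S : Set G) k)
    (hMv' : ∀ k : ℕ, ballVol (S' : Set G') (k + 1) ≤ M * ballVol (S' : Set G') k)
    (f r : ℕ → ℕ) (T : ℕ) :
    let A : ℕ → Set (G × G') := fun n =>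
      {x : G × G' |
        (wordDist (S : Set G) 1 x.1 < r n + T ∧ wordDist (S' : Set G') 1 x.2 < T) ∨
        (wordDist (S' : Set G') 1 x.2 < f (r n) + T ∧ wordDist (S : Set G) 1 x.1 < T)}
    let v'' : ℕ → ℝ := fun n =>
      ∑ t ∈ Finset.range (r n + 1), (sphVol (S : Set G) (r n - t) : ℝ) *
        (ballVol (S' : Set G') (f t) : ℝ)
    (∀ n : ℕ, (A n).ncard ≤
        M ^ T * (ballVol (S : Set G) (r n) * ballVol (S' : Set G') T +
          ballVol (S : Set G) T * ballVol (S' : Set G') (f (r n)))) ∧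
    (Tendsto (fun n : ℕ =>
        v'' n / max (ballVol (S : Set G) (r n) : ℝ) (ballVol (S' : Set G') (f (r n)) : ℝ))
        atTop atTop →
      Tendsto (fun n : ℕ => ((A n).ncard : ℝ) / v'' n) atTop (nhds 0)) := by
  intro A v''
  have hcount (n : ℕ) := ncard_corner_le S S' hgen hgen' hMv hMv' (r n) (f (r n)) T
  refine ⟨hcount, fun hgrowth => ?_⟩
  refine tendsto_div_nhds_zero_of_le_mul (v := v'')
    (m := fun n => max (ballVol (S : Set G) (r n) : ℝ) (ballVol (S' : Set G') (f (r n)) : ℝ))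
    (M ^ T * (ballVol (S' : Set G') T + ballVol (S : Set G) T))
    (fun n => by positivity) (fun n => by positivity) (fun n => ?_) hgrowth
  calc ((A n).ncard : ℝ)
      ≤ M ^ T * ((ballVol (S : Set G) (r n) : ℝ) * ballVol (S' : Set G') T +
          ballVol (S : Set G) T * ballVol (S' : Set G') (f (r n))) := by exact_mod_cast hcount n
    _ ≤ M ^ T * (max (ballVol (S : Set G) (r n) : ℝ) (ballVol (S' : Set G') (f (r n))) *
          ballVol (S' : Set G') T + ballVol (S : Set G) T *
          max (ballVol (S : Set G) (r n) : ℝ) (ballVol (S' : Set G') (f (r n)))) := by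
      gcongr
      exacts [le_max_left _ _, le_max_right _ _]
    _ = _ := by ring

/-- the number of corner-like centers is at most
`M^T (v_{r_n} v'_T + v_T v'_{r'_n})`, and hence is negligible compared to the perturbed
diamond volume `v''_n` whenever `v''_n / max(v_{r_n}, v'_{r'_n}) → ∞`. -/
theorem corner_centers_negligible {G G' : Type*} [Group G] [Group G']
    (S : Finset G) (S' : Finset G')
    (hsym : ∀ s ∈ S, s⁻¹ ∈ S) (hsym' : ∀ s ∈ S', s⁻¹ ∈ S')
    (hgen : ∀ g : G, ∃ n : ℕ, g ∈ wordBall (S : Set G) n)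
    (hgen' : ∀ g : G', ∃ n : ℕ, g ∈ wordBall (S' : Set G') n)
    (M : ℕ) (hMv : ∀ k : ℕ, ballVol (S : Set G) (k + 1) ≤ M * ballVol (S : Set G) k)
    (hMv' : ∀ k : ℕ, ballVol (S' : Set G') (k + 1) ≤ M * ballVol (S' : Set G') k)
    (f r : ℕ → ℕ) (T : ℕ) :
    let A : ℕ → Set (G × G') := fun n =>
      {x : G × G' |
        (wordDist (S : Set G) 1 x.1 < r n + T ∧ wordDist (S' : Set G') 1 x.2 < T) ∨
        (wordDist (S' : Set G') 1 x.2 < f (r n) + T ∧ wordDist (S : Set G) 1 x.1 < T)}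
    let v'' : ℕ → ℝ := fun n =>
      ∑ t ∈ Finset.range (r n + 1), (sphVol (S : Set G) (r n - t) : ℝ) *
        (ballVol (S' : Set G') (f t) : ℝ)
    (∀ n : ℕ, (A n).ncard ≤
        M ^ T * (ballVol (S : Set G) (r n) * ballVol (S' : Set G') T +
          ballVol (S : Set G) T * ballVol (S' : Set G') (f (r n)))) ∧
    (Tendsto (fun n : ℕ =>
        v'' n / max (ballVol (S : Set G) (r n) : ℝ) (ballVol (S' : Set G') (f (r n)) : ℝ))
        atTop atTop →
      Tendsto (fun n : ℕ => ((A n).ncard : ℝ) / v'' n) atTop (nhds 0)) :=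
  corner_centers_negligible_general S S' hgen hgen' M hMv hMv' f r T
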